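/- Let δ be a derivation on a ring R, M an R-bimodule, d a δ-derivation on M, and ₗF_r a symmetric Gabriel filter induced by a left Gabriel filter F_l and a right Gabriel filter F_r. If d(ₗt_r(M)) ⊆ ₗt_r(M), then d extends to a derivation on the symmetric module of quotients ₗM_r such that d q_M = q_M d. -/

import Mathlib

open MulOpposite TensorProduct

/-- A derivation on a ring `S`: an additive map satisfying the Leibniz rule
`δ (a * b) = δ a * b + a * δ b`. -/
def IsDerivation {S : Type*} [Ring S] (δ : S → S) : Prop :=
  (∀ a b : S, δ (a + b) = δ a + δ b) ∧ (∀ a b : S, δ (a * b) = δ a * b + a * δ b)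

/-- A Gabriel filter of left ideals of a ring `S`.  Taking `S = Rᵐᵒᵖ`, this encodes a
Gabriel filter of right ideals of `R`. -/
structure GabrielFilter (S : Type*) [Ring S] where
  sets : Set (Ideal S)
  top_mem : ⊤ ∈ sets
  mono : ∀ ⦃I J : Ideal S⦄, I ∈ sets → I ≤ J → J ∈ sets
  inf_mem : ∀ ⦃I J : Ideal S⦄, I ∈ sets → J ∈ sets → I ⊓ J ∈ sets
  quot_mem : ∀ ⦃I : Ideal S⦄, I ∈ sets → ∀ s : S,
    Submodule.comap (LinearMap.toSpanSingleton S S s) I ∈ sets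
  trans : ∀ ⦃I J : Ideal S⦄, J ∈ sets →
    (∀ s ∈ J, Submodule.comap (LinearMap.toSpanSingleton S S s) I ∈ sets) → I ∈ sets

/-- The torsion set of a module for the torsion theory corresponding to a filter `𝔉` of
ideals: the elements whose annihilator belongs to `𝔉`. -/
def torsionSet {S : Type*} [Ring S] (𝔉 : Set (Ideal S)) (M : Type*) [AddCommGroup M]
    [Module S M] : Set M :=
  {x : M | LinearMap.ker (LinearMap.toSpanSingleton S M x) ∈ 𝔉}

/-- The enveloping ring `R ⊗_ℤ Rᵐᵒᵖ`; an `R`-bimodule is the same thing as a right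
`R ⊗_ℤ Rᵐᵒᵖ`-module, i.e. a left `(R ⊗_ℤ Rᵐᵒᵖ)ᵐᵒᵖ`-module, via `x • (r ⊗ s) = s x r`. -/
abbrev Env (R : Type*) [Ring R] := R ⊗[ℤ] Rᵐᵒᵖ

/-- The left annihilator of an element of an `R`-bimodule, a left ideal of `R`:
`ann_l(x) = {s : R | s • x = 0}`, where the left action of `s` is the action of
`1 ⊗ op s`. -/
def lAnn {R : Type*} [Ring R] (M : Type*) [AddCommGroup M] [Module (Env R)ᵐᵒᵖ M]
    (x : M) : Ideal R where
  carrier := {s : R | op ((1 : R) ⊗ₜ[ℤ] op s) • x = 0}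
  zero_mem' := by simp <;> first | exact zero_smul _ x | exact zero_smul (Env R)ᵐᵒᵖ x
  add_mem' := by
    intro a b ha hb
    simp only [Set.mem_setOf_eq] at *
    rw [show ((1 : R) ⊗ₜ[ℤ] op (a + b)) = (1 : R) ⊗ₜ[ℤ] op a + (1 : R) ⊗ₜ[ℤ] op b by
        rw [op_add, TensorProduct.tmul_add],
      op_add, add_smul, ha, hb, add_zero]
  smul_mem' := by
    intro c s hs
    simp only [Set.mem_setOf_eq, smul_eq_mul] at *
    rw [show ((1 : R) ⊗ₜ[ℤ] op (c * s)) = ((1 : R) ⊗ₜ[ℤ] op s) * ((1 : R) ⊗ₜ[ℤ] op c) by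
        rw [Algebra.TensorProduct.tmul_mul_tmul, one_mul, ← op_mul],
      op_mul, mul_smul, hs, smul_zero]

/-- The right annihilator of an element of an `R`-bimodule, a right ideal of `R`
(encoded as a left ideal of `Rᵐᵒᵖ`): `ann_r(x) = {r | x • r = 0}`, where the right
action of `r` is the action of `r ⊗ 1`. -/
def rAnn {R : Type*} [Ring R] (M : Type*) [AddCommGroup M] [Module (Env R)ᵐᵒᵖ M]
    (x : M) : Ideal Rᵐᵒᵖ where
  carrier := {j : Rᵐᵒᵖ | op (unop j ⊗ₜ[ℤ] (1 : Rᵐᵒᵖ)) • x = 0}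
  zero_mem' := by simp <;> first | exact zero_smul _ x | exact zero_smul (Env R)ᵐᵒᵖ x
  add_mem' := by
    intro a b ha hb
    simp only [Set.mem_setOf_eq] at *
    rw [show (unop (a + b) ⊗ₜ[ℤ] (1 : Rᵐᵒᵖ)) =
          unop a ⊗ₜ[ℤ] (1 : Rᵐᵒᵖ) + unop b ⊗ₜ[ℤ] (1 : Rᵐᵒᵖ) by
        rw [unop_add, TensorProduct.add_tmul],
      op_add, add_smul, ha, hb, add_zero]
  smul_mem' := by
    intro c j hj
    simp only [Set.mem_setOf_eq, smul_eq_mul] at *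
    rw [show (unop (c * j) ⊗ₜ[ℤ] (1 : Rᵐᵒᵖ)) =
          (unop j ⊗ₜ[ℤ] (1 : Rᵐᵒᵖ)) * (unop c ⊗ₜ[ℤ] (1 : Rᵐᵒᵖ)) by
        rw [Algebra.TensorProduct.tmul_mul_tmul, one_mul, unop_mul],
      op_mul, mul_smul, hj, smul_zero]

/-- The symmetric annihilator of an element of a bimodule: the right ideal
`{t ∈ R ⊗_ℤ Rᵐᵒᵖ | x t = 0}`. -/
def symAnn {R : Type*} [Ring R] (M : Type*) [AddCommGroup M] [Module (Env R)ᵐᵒᵖ M]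
    (x : M) : Ideal (Env R)ᵐᵒᵖ :=
  LinearMap.ker (LinearMap.toSpanSingleton (Env R)ᵐᵒᵖ M x)

/-- The right ideal `J ⊗ Rᵐᵒᵖ + R ⊗ I` of `R ⊗_ℤ Rᵐᵒᵖ` generated by a left ideal `I`
and a right ideal `J` of `R`. -/
def symGen {R : Type*} [Ring R] (I : Ideal R) (J : Ideal Rᵐᵒᵖ) : Ideal (Env R)ᵐᵒᵖ :=
  Ideal.span ((fun j : Rᵐᵒᵖ => op (unop j ⊗ₜ[ℤ] (1 : Rᵐᵒᵖ))) '' (J : Set Rᵐᵒᵖ) ∪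
    (fun i : R => op ((1 : R) ⊗ₜ[ℤ] op i)) '' (I : Set R))

/-- The symmetric Gabriel filter induced by a left Gabriel filter `Fl` and a right
Gabriel filter `Fr`: the right ideals of `R ⊗_ℤ Rᵐᵒᵖ` containing `J ⊗ Rᵐᵒᵖ + R ⊗ I` for
some `I ∈ Fl` and `J ∈ Fr`. -/
def symSets {R : Type*} [Ring R] (Fl : GabrielFilter R) (Fr : GabrielFilter Rᵐᵒᵖ) :
    Set (Ideal (Env R)ᵐᵒᵖ) :=
  {K | ∃ I ∈ Fl.sets, ∃ J ∈ Fr.sets, symGen I J ≤ K}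

/-- The torsion submodule of a bimodule for the symmetric torsion theory induced by `Fl`
and `Fr`: `ₗt_r(M) = t_l(M) ∩ t_r(M)`. -/
def symTorsion {R : Type*} [Ring R] (Fl : GabrielFilter R) (Fr : GabrielFilter Rᵐᵒᵖ)
    (M : Type*) [AddCommGroup M] [Module (Env R)ᵐᵒᵖ M] : Set M :=
  {x : M | lAnn M x ∈ Fl.sets} ∩ {x : M | rAnn M x ∈ Fr.sets}

/-- `δ'` is the derivation induced on `R ⊗_ℤ Rᵐᵒᵖ` by the derivation `δ` on `R`:
`δ̄(r ⊗ s) = δ r ⊗ s + r ⊗ δ s`. -/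
def IsInducedDerivation {R : Type*} [Ring R] (δ : R → R) (δ' : Env R → Env R) : Prop :=
  (∀ a b : Env R, δ' (a + b) = δ' a + δ' b) ∧
    ∀ r s : R, δ' (r ⊗ₜ[ℤ] op s) = δ r ⊗ₜ[ℤ] op s + r ⊗ₜ[ℤ] op (δ s)

/-- `d` is a `δ`-derivation on the `R`-bimodule `M`: `d` is additive,
`d (x r) = (d x) r + x (δ r)` and `d (s x) = (δ s) x + s (d x)`. -/
def IsBimodDerivation {R : Type*} [Ring R] (δ : R → R) {M : Type*} [AddCommGroup M]
    [Module (Env R)ᵐᵒᵖ M] (d : M → M) : Prop :=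
  (∀ x y : M, d (x + y) = d x + d y) ∧
  (∀ (x : M) (r : R),
    d (op (r ⊗ₜ[ℤ] (1 : Rᵐᵒᵖ)) • x) =
      op (r ⊗ₜ[ℤ] (1 : Rᵐᵒᵖ)) • d x + op (δ r ⊗ₜ[ℤ] (1 : Rᵐᵒᵖ)) • x) ∧
  (∀ (x : M) (s : R),
    d (op ((1 : R) ⊗ₜ[ℤ] op s) • x) =
      op ((1 : R) ⊗ₜ[ℤ] op (δ s)) • x + op ((1 : R) ⊗ₜ[ℤ] op s) • d x)

/-- The symmetric filter induced by `Fl` and `Fr` is differential: for every `I` in the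
filter there is `K` in the filter with `δ̄(K) ⊆ I` for all derivations `δ` on `R`. -/
def IsSymDifferential {R : Type*} [Ring R] (Fl : GabrielFilter R)
    (Fr : GabrielFilter Rᵐᵒᵖ) : Prop :=
  ∀ I ∈ symSets Fl Fr, ∃ K ∈ symSets Fl Fr, ∀ δ : R → R, IsDerivation δ →
    ∀ δ' : Env R → Env R, IsInducedDerivation δ δ' →
      ∀ t : (Env R)ᵐᵒᵖ, t ∈ K → op (δ' (unop t)) ∈ I

/-- `q : M → Q` realizes `Q` as the symmetric module of quotients of the bimodule `M`
with respect to the symmetric filter induced by `Fl` and `Fr`: the kernel of `q` is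
`ₗt_r(M)`, `Q` is torsion free, the cokernel of `q` is torsion, and `Q` is closed. -/
structure IsSymModuleOfQuotients {R : Type*} [Ring R] (Fl : GabrielFilter R)
    (Fr : GabrielFilter Rᵐᵒᵖ) {M Q : Type*} [AddCommGroup M] [Module (Env R)ᵐᵒᵖ M]
    [AddCommGroup Q] [Module (Env R)ᵐᵒᵖ Q] (q : M →ₗ[(Env R)ᵐᵒᵖ] Q) : Prop where
  ker_eq : (LinearMap.ker q : Set M) = symTorsion Fl Fr M
  torsionFree : symTorsion Fl Fr Q = {0}
  coker_torsion : ∀ y : Q,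
    Submodule.comap (LinearMap.toSpanSingleton (Env R)ᵐᵒᵖ Q y) (LinearMap.range q) ∈
      symSets Fl Fr
  closed : ∀ K ∈ symSets Fl Fr, ∀ f : ↥K →ₗ[(Env R)ᵐᵒᵖ] Q,
    ∃ g : (Env R)ᵐᵒᵖ →ₗ[(Env R)ᵐᵒᵖ] Q, ∀ t : ↥K, g ↑t = f t


/-!
For `y` in the module of quotients `Q`, the right ideal `K = (q(M) : y)` lies in the symmetric
filter, and `t ↦ q (d x) - y δ̄(t)`, for any `x` with `q x = y t`, is a well-defined bimodule
map `K → Q`: well defined because `d` preserves `ker q = ₗt_r(M)`, linear by the Leibniz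
rules of `d` and of the induced derivation `δ̄` of `R ⊗_ℤ Rᵐᵒᵖ`. As `Q` is closed, this map is
multiplication by some `z`, and we put `d' y = z`. Since `Q` is torsion free, `z` is determined
by the values `z t` on any ideal of the filter; this uniqueness gives additivity, the Leibniz
rules and `d' ∘ q = q ∘ d` at once.
-/

section EnvDerivation

variable {R : Type*} [Ring R]

noncomputable def envDerivation (δ : R →+ R) : Env R →ₗ[ℤ] Env R :=
  TensorProduct.map δ.toIntLinearMap LinearMap.id +
    TensorProduct.map LinearMap.id (AddMonoidHom.mulOp δ).toIntLinearMap

lemma envDerivation_tmul (δ : R →+ R) (r : R) (s : Rᵐᵒᵖ) :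
    envDerivation δ (r ⊗ₜ[ℤ] s) = δ r ⊗ₜ[ℤ] s + r ⊗ₜ[ℤ] op (δ (unop s)) :=
  rfl

lemma envDerivation_mul {δ : R →+ R} (hδ : ∀ a b : R, δ (a * b) = δ a * b + a * δ b)
    (a b : Env R) :
    envDerivation δ (a * b) = envDerivation δ a * b + a * envDerivation δ b := by
  induction a using TensorProduct.induction_on with
  | zero => simp
  | add a a' ha ha' => simp only [add_mul, map_add, ha, ha']; abel
  | tmul r s =>
    induction b using TensorProduct.induction_on with
    | zero => simp
    | add b b' hb hb' => simp only [mul_add, map_add, hb, hb']; abel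
    | tmul r' s' =>
      simp only [Algebra.TensorProduct.tmul_mul_tmul, envDerivation_tmul, unop_mul, hδ,
        add_mul, mul_add, add_tmul, tmul_add, op_add, op_mul, op_unop]
      abel

lemma envDerivation_tmul_one {δ : R →+ R} (hδ1 : δ 1 = 0) (r : R) :
    envDerivation δ (r ⊗ₜ[ℤ] (1 : Rᵐᵒᵖ)) = δ r ⊗ₜ[ℤ] (1 : Rᵐᵒᵖ) := by
  simp [envDerivation_tmul, hδ1]

lemma envDerivation_one_tmul {δ : R →+ R} (hδ1 : δ 1 = 0) (s : R) :
    envDerivation δ ((1 : R) ⊗ₜ[ℤ] op s) = (1 : R) ⊗ₜ[ℤ] op (δ s) := by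
  simp [envDerivation_tmul, hδ1]

end EnvDerivation

namespace IsBimodDerivation

variable {R : Type*} [Ring R] {M : Type*} [AddCommGroup M] [Module (Env R)ᵐᵒᵖ M]
  {d : M → M}

lemma map_zero {δ : R → R} (hd : IsBimodDerivation δ d) : d 0 = 0 :=
  (AddMonoidHom.mk' d hd.1).map_zero

lemma map_sub {δ : R → R} (hd : IsBimodDerivation δ d) (x y : M) : d (x - y) = d x - d y :=
  (AddMonoidHom.mk' d hd.1).map_sub x y

lemma map_smul {δ : R →+ R} (hd : IsBimodDerivation δ d) (v : Env R) (x : M) :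
    d (op v • x) = op v • d x + op (envDerivation δ v) • x := by
  induction v using TensorProduct.induction_on with
  | zero =>
    have hzero (y : M) : op (0 : Env R) • y = 0 := by
      rw [op_zero]
      exact zero_smul (Env R)ᵐᵒᵖ y
    rw [_root_.map_zero, hzero, hzero, hd.map_zero, add_zero]
  | add a b ha hb =>
    simp only [op_add, add_smul, hd.1, ha, hb, _root_.map_add]
    abel
  | tmul r s =>
    have hsplit : op (r ⊗ₜ[ℤ] s) • x
        = op ((1 : R) ⊗ₜ[ℤ] op (unop s)) • op (r ⊗ₜ[ℤ] (1 : Rᵐᵒᵖ)) • x := by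
      rw [← mul_smul, ← op_mul, Algebra.TensorProduct.tmul_mul_tmul, mul_one, one_mul, op_unop]
    rw [hsplit, hd.2.2, hd.2.1, smul_add]
    simp only [← mul_smul, ← op_mul, Algebra.TensorProduct.tmul_mul_tmul, mul_one, one_mul,
      op_unop, envDerivation_tmul, op_add, add_smul]
    abel

end IsBimodDerivation

section SymFilter

variable {R : Type*} [Ring R] {Fl : GabrielFilter R} {Fr : GabrielFilter Rᵐᵒᵖ}

lemma symGen_mono {I I' : Ideal R} {J J' : Ideal Rᵐᵒᵖ} (hI : I' ≤ I) (hJ : J' ≤ J) :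
    symGen I' J' ≤ symGen I J :=
  Ideal.span_mono (Set.union_subset_union (Set.image_mono hJ) (Set.image_mono hI))

lemma one_tmul_mem_symGen {I : Ideal R} (J : Ideal Rᵐᵒᵖ) {i : R} (hi : i ∈ I) :
    op ((1 : R) ⊗ₜ[ℤ] op i) ∈ symGen I J :=
  Ideal.subset_span (Or.inr ⟨i, hi, rfl⟩)

lemma tmul_one_mem_symGen (I : Ideal R) {J : Ideal Rᵐᵒᵖ} {j : Rᵐᵒᵖ} (hj : j ∈ J) :
    op (unop j ⊗ₜ[ℤ] (1 : Rᵐᵒᵖ)) ∈ symGen I J :=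
  Ideal.subset_span (Or.inl ⟨j, hj, rfl⟩)

lemma inf_mem_symSets {K K' : Ideal (Env R)ᵐᵒᵖ} (hK : K ∈ symSets Fl Fr)
    (hK' : K' ∈ symSets Fl Fr) : K ⊓ K' ∈ symSets Fl Fr := by
  obtain ⟨I, hI, J, hJ, hle⟩ := hK
  obtain ⟨I', hI', J', hJ', hle'⟩ := hK'
  exact ⟨I ⊓ I', Fl.inf_mem hI hI', J ⊓ J', Fr.inf_mem hJ hJ',
    le_inf ((symGen_mono inf_le_left inf_le_left).trans hle)
      ((symGen_mono inf_le_right inf_le_right).trans hle')⟩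

lemma mem_symTorsion_of_forall_smul_eq_zero {Q : Type*} [AddCommGroup Q]
    [Module (Env R)ᵐᵒᵖ Q] {K : Ideal (Env R)ᵐᵒᵖ} (hK : K ∈ symSets Fl Fr) {z : Q}
    (hz : ∀ t ∈ K, t • z = 0) : z ∈ symTorsion Fl Fr Q := by
  obtain ⟨I, hI, J, hJ, hle⟩ := hK
  exact ⟨Fl.mono hI fun i hi => hz _ (hle (one_tmul_mem_symGen J hi)),
    Fr.mono hJ fun j hj => hz _ (hle (tmul_one_mem_symGen I hj))⟩

end SymFilter

section ModuleOfQuotients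

variable {R : Type*} [Ring R] {Fl : GabrielFilter R} {Fr : GabrielFilter Rᵐᵒᵖ}
  {M Q : Type*} [AddCommGroup M] [Module (Env R)ᵐᵒᵖ M] [AddCommGroup Q] [Module (Env R)ᵐᵒᵖ Q]
  {q : M →ₗ[(Env R)ᵐᵒᵖ] Q}

lemma mem_range_colon_singleton {y : Q} {t : (Env R)ᵐᵒᵖ} :
    t ∈ (LinearMap.range q).colon {y} ↔ ∃ x, q x = t • y := by
  rw [Submodule.mem_colon_singleton, LinearMap.mem_range]

namespace IsSymModuleOfQuotients

variable (hq : IsSymModuleOfQuotients Fl Fr q)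
include hq

lemma range_colon_singleton_mem (y : Q) : (LinearMap.range q).colon {y} ∈ symSets Fl Fr := by
  convert hq.coker_torsion y using 1
  ext t
  rw [Submodule.mem_colon_singleton, Submodule.mem_comap, LinearMap.toSpanSingleton_apply]

lemma eq_of_forall_smul_eq {K : Ideal (Env R)ᵐᵒᵖ} (hK : K ∈ symSets Fl Fr) {w w' : Q}
    (h : ∀ t ∈ K, t • w = t • w') : w = w' := by
  have hw : w - w' ∈ symTorsion Fl Fr Q :=
    mem_symTorsion_of_forall_smul_eq_zero hK fun t ht => by rw [smul_sub, h t ht, sub_self]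
  rw [hq.torsionFree] at hw
  exact sub_eq_zero.mp hw

lemma map_apply_eq_of_map_eq {δ : R → R} {d : M → M} (hd : IsBimodDerivation δ d)
    (hinv : ∀ x ∈ symTorsion Fl Fr M, d x ∈ symTorsion Fl Fr M) {x x' : M}
    (h : q x = q x') : q (d x) = q (d x') := by
  have hker : ∀ z : M, q z = 0 ↔ z ∈ symTorsion Fl Fr M := fun z => by
    rw [← hq.ker_eq]; rfl
  rw [← sub_eq_zero, ← map_sub, ← hd.map_sub, hker]
  exact hinv _ ((hker _).mp (by rw [map_sub, h, sub_self]))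

end IsSymModuleOfQuotients

end ModuleOfQuotients

section Extension

variable {R : Type*} [Ring R] {Fl : GabrielFilter R} {Fr : GabrielFilter Rᵐᵒᵖ}
  {M Q : Type*} [AddCommGroup M] [Module (Env R)ᵐᵒᵖ M] [AddCommGroup Q] [Module (Env R)ᵐᵒᵖ Q]
  {δ : R →+ R} {d : M → M} {q : M →ₗ[(Env R)ᵐᵒᵖ] Q}

/-- `z` is a possible value at `y` of an extension `d'` of `d`: if `y t = q x`, the Leibniz rule
`d' (y t) = (d' y) t + y δ̄(t)` forces `(d' y) t = q (d x) - y δ̄(t)`. -/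
def IsExtensionValue (δ : R →+ R) (d : M → M) (q : M →ₗ[(Env R)ᵐᵒᵖ] Q) (y z : Q) : Prop :=
  ∀ (t : (Env R)ᵐᵒᵖ) (x : M), q x = t • y →
    t • z = q (d x) - op (envDerivation δ (unop t)) • y

namespace IsExtensionValue

variable {y y' z z' w : Q}

lemma unique (hq : IsSymModuleOfQuotients Fl Fr q) (h : IsExtensionValue δ d q y z)
    (h' : IsExtensionValue δ d q y z') : z = z' :=
  hq.eq_of_forall_smul_eq (hq.range_colon_singleton_mem y) fun t ht => by
    obtain ⟨x, hx⟩ := mem_range_colon_singleton.mp ht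
    rw [h t x hx, h' t x hx]

lemma eq_add (hq : IsSymModuleOfQuotients Fl Fr q) (hd : IsBimodDerivation δ d)
    (hw : IsExtensionValue δ d q (y + y') w) (h : IsExtensionValue δ d q y z)
    (h' : IsExtensionValue δ d q y' z') : w = z + z' :=
  hq.eq_of_forall_smul_eq
    (inf_mem_symSets (hq.range_colon_singleton_mem y) (hq.range_colon_singleton_mem y'))
    fun t ht => by
      obtain ⟨x, hx⟩ := mem_range_colon_singleton.mp ht.1
      obtain ⟨x', hx'⟩ := mem_range_colon_singleton.mp ht.2
      rw [hw t (x + x') (by rw [map_add, hx, hx', smul_add]), smul_add t z z', h t x hx,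
        h' t x' hx', hd.1, map_add, smul_add]
      abel

lemma smul (hδ : ∀ a b : R, δ (a * b) = δ a * b + a * δ b) (h : IsExtensionValue δ d q y z)
    (v : Env R) :
    IsExtensionValue δ d q (op v • y) (op v • z + op (envDerivation δ v) • y) := by
  intro t x hx
  rw [smul_add, ← mul_smul, ← mul_smul, h (t * op v) x (by rw [hx, mul_smul]), unop_mul,
    unop_op, envDerivation_mul hδ, op_add, add_smul, op_mul, op_mul, op_unop,
    show t * op (envDerivation δ v) = op (unop t) * op (envDerivation δ v) by rw [op_unop],
    mul_smul, mul_smul]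
  abel

end IsExtensionValue

lemma isExtensionValue_map (hq : IsSymModuleOfQuotients Fl Fr q) (hd : IsBimodDerivation δ d)
    (hinv : ∀ x ∈ symTorsion Fl Fr M, d x ∈ symTorsion Fl Fr M) (x : M) :
    IsExtensionValue δ d q (q x) (q (d x)) := by
  intro t x' hx'
  have hdt := hd.map_smul (unop t) x
  rw [op_unop] at hdt
  rw [hq.map_apply_eq_of_map_eq hd hinv (hx'.trans (map_smul q t x).symm), hdt, map_add,
    map_smul, map_smul]
  abel

lemma exists_linearMap_range_colon (hδ : ∀ a b : R, δ (a * b) = δ a * b + a * δ b)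
    (hq : IsSymModuleOfQuotients Fl Fr q) (hd : IsBimodDerivation δ d)
    (hinv : ∀ x ∈ symTorsion Fl Fr M, d x ∈ symTorsion Fl Fr M) (y : Q) :
    ∃ f : (LinearMap.range q).colon {y} →ₗ[(Env R)ᵐᵒᵖ] Q,
      ∀ (t : (LinearMap.range q).colon {y}) (x : M), q x = (t : (Env R)ᵐᵒᵖ) • y →
        f t = q (d x) - op (envDerivation δ (unop (t : (Env R)ᵐᵒᵖ))) • y := by
  choose xc hxc using fun t : (LinearMap.range q).colon {y} => mem_range_colon_singleton.mp t.2
  have hwd {x x' : M} (h : q x = q x') : q (d x) = q (d x') :=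
    hq.map_apply_eq_of_map_eq hd hinv h
  refine ⟨{ toFun t := q (d (xc t)) - op (envDerivation δ (unop (t : (Env R)ᵐᵒᵖ))) • y,
            map_add' := fun s t => ?_,
            map_smul' := fun c t => ?_ }, fun t x hx => ?_⟩
  · rw [hwd (x' := xc s + xc t) (by rw [hxc, map_add, hxc, hxc, Submodule.coe_add, add_smul]),
      hd.1, map_add]
    simp only [Submodule.coe_add, unop_add, map_add, op_add, add_smul]
    abel
  · have hct : ((c • t : (LinearMap.range q).colon {y}) : (Env R)ᵐᵒᵖ) = c * t := rfl
    rw [RingHom.id_apply, hwd (x' := c • xc t) (by rw [hxc, map_smul, hxc, hct, mul_smul]),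
      ← op_unop c, hd.map_smul, map_add, map_smul, map_smul, op_unop, hxc, hct, unop_mul,
      envDerivation_mul hδ, op_add, add_smul, op_mul, op_mul, op_unop, op_unop, mul_smul,
      mul_smul, smul_sub]
    abel
  · exact congrArg (· - _) (hwd ((hxc t).trans hx.symm))

lemma exists_isExtensionValue (hδ : ∀ a b : R, δ (a * b) = δ a * b + a * δ b)
    (hq : IsSymModuleOfQuotients Fl Fr q) (hd : IsBimodDerivation δ d)
    (hinv : ∀ x ∈ symTorsion Fl Fr M, d x ∈ symTorsion Fl Fr M) (y : Q) :
    ∃ z, IsExtensionValue δ d q y z := by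
  obtain ⟨f, hf⟩ := exists_linearMap_range_colon hδ hq hd hinv y
  obtain ⟨g, hg⟩ := hq.closed _ (hq.range_colon_singleton_mem y) f
  refine ⟨g 1, fun t x hx => ?_⟩
  rw [← map_smul, smul_eq_mul, mul_one, hg ⟨t, mem_range_colon_singleton.mpr ⟨x, hx⟩⟩,
    hf _ x hx]

end Extension

/-- Let `δ` be a derivation on `R`, `M` an `R`-bimodule, `d` a
`δ`-derivation on `M` and `ₗF_r` the symmetric Gabriel filter induced by `Fl` and `Fr`.
If `d(ₗt_r(M)) ⊆ ₗt_r(M)`, then `d` extends to a derivation `d'` on the symmetric module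
of quotients `ₗM_r` such that `d' ∘ q_M = q_M ∘ d`. -/
theorem sym_extension_of_torsion_invariant {R : Type*} [Ring R]
    (δ : R → R) (hδ : IsDerivation δ)
    (Fl : GabrielFilter R) (Fr : GabrielFilter Rᵐᵒᵖ)
    {M Q : Type*} [AddCommGroup M] [Module (Env R)ᵐᵒᵖ M]
    [AddCommGroup Q] [Module (Env R)ᵐᵒᵖ Q]
    (d : M → M) (hd : IsBimodDerivation δ d)
    (q : M →ₗ[(Env R)ᵐᵒᵖ] Q) (hq : IsSymModuleOfQuotients Fl Fr q)
    (hinv : ∀ x ∈ symTorsion Fl Fr M, d x ∈ symTorsion Fl Fr M) :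
    ∃ d' : Q → Q, IsBimodDerivation δ d' ∧ ∀ x : M, d' (q x) = q (d x) := by
  let δ' : R →+ R := AddMonoidHom.mk' δ hδ.1
  have hd' : IsBimodDerivation δ' d := hd
  have hδ1 : δ' 1 = 0 := show δ 1 = 0 by simpa using hδ.2 1 1
  choose e he using exists_isExtensionValue hδ.2 hq hd' hinv
  refine ⟨e, ⟨fun y y' => (he (y + y')).eq_add hq hd' (he y) (he y'), fun y r => ?_,
    fun y s => ?_⟩, fun x => (he (q x)).unique hq (isExtensionValue_map hq hd' hinv x)⟩
  · rw [(he _).unique hq ((he y).smul hδ.2 _), envDerivation_tmul_one hδ1]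
    rfl
  · rw [(he _).unique hq ((he y).smul hδ.2 _), envDerivation_one_tmul hδ1, add_comm]
    rfl
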